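/- arXiv:2403.03076 — 5 statements merged into one kernel-verified Lean document; each statement's English description precedes it below -/
import Mathlib

section
/- For every (n,m) ∈ ℤ², the function B_c satisfies the discrete screened Poisson equation with a Kronecker delta source: c²·B_c(n,m) + α₁·(2B_c(n,m) − B_c(n−1,m) − B_c(n+1,m)) + (2B_c(n,m) − B_c(n,m−1) − B_c(n,m+1)) = δ_{0n}·δ_{0m}, where δ is the Kronecker delta. -/
open MeasureTheory

/-- The lattice Green's function of the 2D screened Poisson equation. -/
noncomputable def B (α₁ c : ℝ) (n m : ℤ) : ℂ :=
  (1 / (2 * Real.pi) ^ 2 : ℂ) *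
    ∫ ξ : ℝ × ℝ in Set.Icc (-Real.pi) Real.pi ×ˢ Set.Icc (-Real.pi) Real.pi,
      Complex.exp (-Complex.I * ((n : ℂ) * (ξ.1 : ℂ) + (m : ℂ) * (ξ.2 : ℂ))) /
        ((2 * α₁ * (1 - Real.cos ξ.1) + 2 * (1 - Real.cos ξ.2) + c ^ 2 : ℝ) : ℂ)

/-- Auxiliary: the integrand of `B`. -/
noncomputable def Bint (α₁ c : ℝ) (a b : ℤ) (ξ : ℝ × ℝ) : ℂ :=
  Complex.exp (-Complex.I * ((a : ℂ) * (ξ.1 : ℂ) + (b : ℂ) * (ξ.2 : ℂ))) /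
    ((2 * α₁ * (1 - Real.cos ξ.1) + 2 * (1 - Real.cos ξ.2) + c ^ 2 : ℝ) : ℂ)

lemma B_eq (α₁ c : ℝ) (a b : ℤ) :
    B α₁ c a b = (1 / (2 * Real.pi) ^ 2 : ℂ) *
      ∫ ξ : ℝ × ℝ in Set.Icc (-Real.pi) Real.pi ×ˢ Set.Icc (-Real.pi) Real.pi,
        Bint α₁ c a b ξ := rfl

lemma denom_pos {α₁ c : ℝ} (hα₀ : 0 < α₁) (hc : 0 < c) (x y : ℝ) :
    (0:ℝ) < 2 * α₁ * (1 - Real.cos x) + 2 * (1 - Real.cos y) + c ^ 2 := by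
  nlinarith [Real.cos_le_one x, Real.cos_le_one y, sq_nonneg c]

lemma Bint_integrable {α₁ c : ℝ} (hα₀ : 0 < α₁) (hc : 0 < c) (a b : ℤ) :
    IntegrableOn (Bint α₁ c a b)
      (Set.Icc (-Real.pi) Real.pi ×ˢ Set.Icc (-Real.pi) Real.pi) := by
  apply ContinuousOn.integrableOn_compact (isCompact_Icc.prod isCompact_Icc)
  apply Continuous.continuousOn
  apply Continuous.div
  · exact Complex.continuous_exp.comp (by fun_prop)
  · fun_prop
  · intro ξ
    exact_mod_cast (denom_pos hα₀ hc ξ.1 ξ.2).ne'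

lemma pointwise_identity {α₁ c : ℝ} (hα₀ : 0 < α₁) (hc : 0 < c) (n m : ℤ) (ξ : ℝ × ℝ) :
    (c ^ 2 : ℂ) * Bint α₁ c n m ξ
      + (α₁ : ℂ) * (2 * Bint α₁ c n m ξ - Bint α₁ c (n - 1) m ξ - Bint α₁ c (n + 1) m ξ)
      + (2 * Bint α₁ c n m ξ - Bint α₁ c n (m - 1) ξ - Bint α₁ c n (m + 1) ξ)
      = Complex.exp (-Complex.I * ((n : ℂ) * (ξ.1 : ℂ) + (m : ℂ) * (ξ.2 : ℂ))) := by
  obtain ⟨x, y⟩ := ξ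
  unfold Bint
  simp only
  have hDpos := denom_pos hα₀ hc x y
  have hD : ((2 * α₁ * (1 - Real.cos x) + 2 * (1 - Real.cos y) + c ^ 2 : ℝ) : ℂ) ≠ 0 := by
    exact_mod_cast hDpos.ne'
  have hcx : Complex.cos (x:ℂ) = (Complex.exp (Complex.I * x) + (Complex.exp (Complex.I * x))⁻¹) / 2 := by
    rw [Complex.cos, ← Complex.exp_neg]; ring_nf
  have hcy : Complex.cos (y:ℂ) = (Complex.exp (Complex.I * y) + (Complex.exp (Complex.I * y))⁻¹) / 2 := by
    rw [Complex.cos, ← Complex.exp_neg]; ring_nf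
  have e1 : Complex.exp (-Complex.I * (((n - 1 : ℤ) : ℂ) * x + (m : ℂ) * y))
      = Complex.exp (-Complex.I * ((n : ℂ) * x + (m : ℂ) * y)) * Complex.exp (Complex.I * x) := by
    rw [← Complex.exp_add]; push_cast; ring_nf
  have e2 : Complex.exp (-Complex.I * (((n + 1 : ℤ) : ℂ) * x + (m : ℂ) * y))
      = Complex.exp (-Complex.I * ((n : ℂ) * x + (m : ℂ) * y)) * (Complex.exp (Complex.I * x))⁻¹ := by
    rw [← Complex.exp_neg, ← Complex.exp_add]; push_cast; ring_nf
  have e3 : Complex.exp (-Complex.I * ((n : ℂ) * x + ((m - 1 : ℤ) : ℂ) * y))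
      = Complex.exp (-Complex.I * ((n : ℂ) * x + (m : ℂ) * y)) * Complex.exp (Complex.I * y) := by
    rw [← Complex.exp_add]; push_cast; ring_nf
  have e4 : Complex.exp (-Complex.I * ((n : ℂ) * x + ((m + 1 : ℤ) : ℂ) * y))
      = Complex.exp (-Complex.I * ((n : ℂ) * x + (m : ℂ) * y)) * (Complex.exp (Complex.I * y))⁻¹ := by
    rw [← Complex.exp_neg, ← Complex.exp_add]; push_cast; ring_nf
  have hK : ((2 * α₁ * (1 - Real.cos x) + 2 * (1 - Real.cos y) + c ^ 2 : ℝ) : ℂ)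
      = (c:ℂ)^2 + (α₁:ℂ) * (2 - Complex.exp (Complex.I * x) - (Complex.exp (Complex.I * x))⁻¹)
        + (2 - Complex.exp (Complex.I * y) - (Complex.exp (Complex.I * y))⁻¹) := by
    push_cast
    rw [hcx, hcy]
    have hx := Complex.exp_ne_zero (Complex.I * (x:ℂ))
    have hy := Complex.exp_ne_zero (Complex.I * (y:ℂ))
    field_simp
    ring
  rw [hK] at hD
  rw [e1, e2, e3, e4, hK]
  set a := Complex.exp (Complex.I * (x:ℂ)) with ha
  set b := Complex.exp (Complex.I * (y:ℂ)) with hb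
  set E := Complex.exp (-Complex.I * ((n : ℂ) * x + (m : ℂ) * y)) with hE
  set K := (c:ℂ)^2 + (α₁:ℂ) * (2 - a - a⁻¹) + (2 - b - b⁻¹) with hKdef
  calc (c:ℂ) ^ 2 * (E / K) + (α₁:ℂ) * (2 * (E / K) - E * a / K - E * a⁻¹ / K)
        + (2 * (E / K) - E * b / K - E * b⁻¹ / K)
      = E * K / K := by rw [hKdef]; ring
    _ = E := mul_div_cancel_right₀ E hD

lemma exp_int_pi (k : ℤ) : Complex.exp (Complex.I * k * Real.pi) = (-1 : ℂ) ^ k := by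
  have : Complex.I * k * Real.pi = k * (Real.pi * Complex.I) := by ring
  rw [this, Complex.exp_int_mul, Complex.exp_pi_mul_I]

lemma int1D (k : ℤ) :
    ∫ x : ℝ in Set.Icc (-Real.pi) Real.pi, Complex.exp (-Complex.I * k * x)
      = if k = 0 then (2 * Real.pi : ℂ) else 0 := by
  rw [MeasureTheory.integral_Icc_eq_integral_Ioc,
    ← intervalIntegral.integral_of_le (by linarith [Real.pi_pos] : (-Real.pi : ℝ) ≤ Real.pi)]
  by_cases hk : k = 0
  · simp [hk]
    ring
  · have hc : (-Complex.I * k : ℂ) ≠ 0 := by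
      simp [Complex.ext_iff, hk, Complex.I_ne_zero]
    have := integral_exp_mul_complex (a := -Real.pi) (b := Real.pi) hc
    simp only [mul_assoc] at this ⊢
    rw [this]
    have h1 : Complex.exp (-Complex.I * (k * Real.pi)) = (-1:ℂ)^(-k) := by
      rw [← exp_int_pi (-k)]; push_cast; ring_nf
    have h2 : Complex.exp (-Complex.I * (k * ((-Real.pi : ℝ) : ℂ))) = (-1:ℂ)^k := by
      rw [← exp_int_pi k]; push_cast; ring_nf
    rw [h1, h2, if_neg hk, zpow_neg, ← inv_zpow, inv_neg, inv_one, sub_self, zero_div]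

lemma prod_factor (n m : ℤ) :
    ∫ ξ : ℝ × ℝ in Set.Icc (-Real.pi) Real.pi ×ˢ Set.Icc (-Real.pi) Real.pi,
      Complex.exp (-Complex.I * ((n : ℂ) * (ξ.1 : ℂ) + (m : ℂ) * (ξ.2 : ℂ)))
    = (∫ x : ℝ in Set.Icc (-Real.pi) Real.pi, Complex.exp (-Complex.I * n * x)) *
      (∫ y : ℝ in Set.Icc (-Real.pi) Real.pi, Complex.exp (-Complex.I * m * y)) := by
  rw [MeasureTheory.Measure.volume_eq_prod, ← Measure.prod_restrict]
  rw [← MeasureTheory.integral_prod_mul (μ := volume.restrict (Set.Icc (-Real.pi) Real.pi))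
    (ν := volume.restrict (Set.Icc (-Real.pi) Real.pi))
    (f := fun x : ℝ => Complex.exp (-Complex.I * n * x))
    (g := fun y : ℝ => Complex.exp (-Complex.I * m * y))]
  congr 1
  funext ξ
  rw [← Complex.exp_add]
  ring_nf

/-- `B_c` satisfies the discrete screened Poisson equation with Kronecker delta source. -/
theorem stmt0 (α₁ c : ℝ) (hα₀ : 0 < α₁) (hα₁ : α₁ ≤ 1) (hc : 0 < c) (n m : ℤ) :
    (c ^ 2 : ℂ) * B α₁ c n m
      + (α₁ : ℂ) * (2 * B α₁ c n m - B α₁ c (n - 1) m - B α₁ c (n + 1) m)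
      + (2 * B α₁ c n m - B α₁ c n (m - 1) - B α₁ c n (m + 1))
      = if n = 0 ∧ m = 0 then 1 else 0 := by
  have hπ := Real.pi_pos
  set S := Set.Icc (-Real.pi) Real.pi ×ˢ Set.Icc (-Real.pi) Real.pi with hS
  have i0 := Bint_integrable hα₀ hc n m
  have i1 := Bint_integrable hα₀ hc (n-1) m
  have i2 := Bint_integrable hα₀ hc (n+1) m
  have i3 := Bint_integrable hα₀ hc n (m-1)
  have i4 := Bint_integrable hα₀ hc n (m+1)
  have h20 : Integrable (fun ξ : ℝ × ℝ => 2 * Bint α₁ c n m ξ)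
      (volume.restrict S) := by exact i0.const_mul 2
  have h21 : Integrable (fun ξ : ℝ × ℝ => 2 * Bint α₁ c n m ξ - Bint α₁ c (n-1) m ξ)
      (volume.restrict S) := by exact (i0.const_mul 2).sub i1
  have h212 : Integrable (fun ξ : ℝ × ℝ => 2 * Bint α₁ c n m ξ - Bint α₁ c (n-1) m ξ
      - Bint α₁ c (n+1) m ξ) (volume.restrict S) := by exact h21.sub i2
  have h23 : Integrable (fun ξ : ℝ × ℝ => 2 * Bint α₁ c n m ξ - Bint α₁ c n (m-1) ξ)
      (volume.restrict S) := by exact (i0.const_mul 2).sub i3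
  have h234 : Integrable (fun ξ : ℝ × ℝ => 2 * Bint α₁ c n m ξ - Bint α₁ c n (m-1) ξ
      - Bint α₁ c n (m+1) ξ) (volume.restrict S) := by exact h23.sub i4
  have hA : Integrable (fun ξ : ℝ × ℝ => (c ^ 2 : ℂ) * Bint α₁ c n m ξ)
      (volume.restrict S) := by exact i0.const_mul _
  have hB : Integrable (fun ξ : ℝ × ℝ => (α₁ : ℂ) * (2 * Bint α₁ c n m ξ
      - Bint α₁ c (n-1) m ξ - Bint α₁ c (n+1) m ξ)) (volume.restrict S) := by
    exact h212.const_mul _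
  have hAB : Integrable (fun ξ : ℝ × ℝ => (c ^ 2 : ℂ) * Bint α₁ c n m ξ
      + (α₁ : ℂ) * (2 * Bint α₁ c n m ξ - Bint α₁ c (n-1) m ξ - Bint α₁ c (n+1) m ξ))
      (volume.restrict S) := by exact hA.add hB
  have key : ∫ ξ : ℝ × ℝ in S,
        Complex.exp (-Complex.I * ((n : ℂ) * (ξ.1 : ℂ) + (m : ℂ) * (ξ.2 : ℂ)))
      = (c ^ 2 : ℂ) * (∫ ξ in S, Bint α₁ c n m ξ)
        + (α₁ : ℂ) * (2 * (∫ ξ in S, Bint α₁ c n m ξ) - (∫ ξ in S, Bint α₁ c (n-1) m ξ)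
            - (∫ ξ in S, Bint α₁ c (n+1) m ξ))
        + (2 * (∫ ξ in S, Bint α₁ c n m ξ) - (∫ ξ in S, Bint α₁ c n (m-1) ξ)
            - (∫ ξ in S, Bint α₁ c n (m+1) ξ)) := by
    rw [show (fun ξ : ℝ × ℝ =>
        Complex.exp (-Complex.I * ((n : ℂ) * (ξ.1 : ℂ) + (m : ℂ) * (ξ.2 : ℂ))))
      = fun ξ => (c ^ 2 : ℂ) * Bint α₁ c n m ξ
        + (α₁ : ℂ) * (2 * Bint α₁ c n m ξ - Bint α₁ c (n-1) m ξ - Bint α₁ c (n+1) m ξ)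
        + (2 * Bint α₁ c n m ξ - Bint α₁ c n (m-1) ξ - Bint α₁ c n (m+1) ξ)
      from funext fun ξ => (pointwise_identity hα₀ hc n m ξ).symm]
    rw [integral_add hAB h234, integral_add hA hB, integral_const_mul _ _, integral_const_mul _ _,
      integral_sub h21 (by exact i2), integral_sub h20 (by exact i1), integral_const_mul _ _,
      integral_sub h23 (by exact i4), integral_sub h20 (by exact i3), integral_const_mul _ _]
  have lhs_eq :
      (c ^ 2 : ℂ) * B α₁ c n m
        + (α₁ : ℂ) * (2 * B α₁ c n m - B α₁ c (n - 1) m - B α₁ c (n + 1) m)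
        + (2 * B α₁ c n m - B α₁ c n (m - 1) - B α₁ c n (m + 1))
      = (1 / (2 * Real.pi) ^ 2 : ℂ) *
          ∫ ξ : ℝ × ℝ in S,
            Complex.exp (-Complex.I * ((n : ℂ) * (ξ.1 : ℂ) + (m : ℂ) * (ξ.2 : ℂ))) := by
    rw [key, B_eq, B_eq, B_eq, B_eq, B_eq]
    ring
  rw [lhs_eq, prod_factor, int1D, int1D]
  have hπne : (Real.pi : ℂ) ≠ 0 := by exact_mod_cast Real.pi_ne_zero
  by_cases hn : n = 0 <;> by_cases hm : m = 0 <;> simp [hn, hm]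
  field_simp
end

section
/- For every natural number N and every (n,m) ∈ ℤ², the truncation error of the N-term approximation satisfies |B_c(n,m) − G_N(c,n,m)| ≤ (1/c²)·(λ/(λ+c²))^N. -/
/-!
Since `σ(ξ) + c² = (λ + c²) − ρ(ξ)` with `|ρ| ≤ λ`, the coefficient `G_N(c,n,m)` is the Fourier
coefficient of the truncated Neumann series `∑_{k<N} ρ^k / (λ+c²)^(k+1)` of `1 / (λ + c² − ρ)`.
The remainder of that series is `(ρ/(λ+c²))^N / (λ + c² − ρ)`, which is pointwise at most
`(λ/(λ+c²))^N / c²`, and a Fourier coefficient normalised by `1/(4π²)` is bounded by the supremum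
of the function.
-/

open MeasureTheory

/-- The coefficients `g_k(n,m)` of the series expansion of the LGF. -/
noncomputable def g (α₁ : ℝ) (k : ℕ) (n m : ℤ) : ℂ :=
  (1 / (4 * Real.pi ^ 2) : ℂ) *
    ∫ ξ : ℝ × ℝ in Set.Icc (-Real.pi) Real.pi ×ˢ Set.Icc (-Real.pi) Real.pi,
      Complex.exp (-Complex.I * ((n : ℂ) * (ξ.1 : ℂ) + (m : ℂ) * (ξ.2 : ℂ))) *
        (((2 * α₁ * Real.cos ξ.1 + 2 * Real.cos ξ.2) / (2 + 2 * α₁) : ℝ) : ℂ) ^ k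

/-- The `N`-term approximation `G_N(c,n,m)` of the LGF. -/
noncomputable def G (α₁ c : ℝ) (N : ℕ) (n m : ℤ) : ℂ :=
  (1 / ((2 + 2 * α₁ + c ^ 2 : ℝ) : ℂ)) *
    ∑ k ∈ Finset.range N,
      ((((2 + 2 * α₁) / (2 + 2 * α₁ + c ^ 2) : ℝ)) : ℂ) ^ k * g α₁ k n m

open Finset

theorem inv_sub_sum_pow_div_pow_succ {K : Type*} [Field K] {L ρ : K} (hL : L ≠ 0)
    (hLρ : L - ρ ≠ 0) (N : ℕ) :
    1 / (L - ρ) - ∑ k ∈ range N, ρ ^ k / L ^ (k + 1) = (ρ / L) ^ N / (L - ρ) := by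
  induction N with
  | zero => simp
  | succ N ih =>
    rw [sum_range_succ, ← sub_sub, ih, div_pow, div_pow]
    field_simp
    ring

theorem abs_inv_sub_sum_pow_div_pow_succ_le {L ρ r : ℝ} (hρ : |ρ| ≤ r) (hrL : r < L) (N : ℕ) :
    |1 / (L - ρ) - ∑ k ∈ range N, ρ ^ k / L ^ (k + 1)| ≤ (r / L) ^ N / (L - r) := by
  have hr : 0 ≤ r := (abs_nonneg ρ).trans hρ
  have hL : 0 < L := hr.trans_lt hrL
  have hLρ : L - r ≤ L - ρ := by linarith [le_abs_self ρ]
  rw [inv_sub_sum_pow_div_pow_succ hL.ne' (by linarith), abs_div, abs_pow, abs_div,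
    abs_of_pos hL, abs_of_pos (show 0 < L - ρ by linarith)]
  gcongr

namespace LatticeGreen

open Real

noncomputable def squareFourierCoeff (n m : ℤ) (f : ℝ × ℝ → ℝ) : ℂ :=
  (1 / (4 * π ^ 2) : ℂ) *
    ∫ ξ : ℝ × ℝ in Set.Icc (-π) π ×ˢ Set.Icc (-π) π,
      Complex.exp (-Complex.I * ((n : ℂ) * (ξ.1 : ℂ) + (m : ℂ) * (ξ.2 : ℂ))) * (f ξ : ℂ)

section squareFourierCoeff

variable {n m : ℤ}

theorem integrableOn_squareFourierCoeff_integrand {f : ℝ × ℝ → ℝ} (hf : Continuous f) :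
    IntegrableOn
      (fun ξ : ℝ × ℝ ↦
        Complex.exp (-Complex.I * ((n : ℂ) * (ξ.1 : ℂ) + (m : ℂ) * (ξ.2 : ℂ))) * (f ξ : ℂ))
      (Set.Icc (-π) π ×ˢ Set.Icc (-π) π) :=
  (by fun_prop : Continuous _).continuousOn.integrableOn_compact (isCompact_Icc.prod isCompact_Icc)

theorem squareFourierCoeff_sub {f g : ℝ × ℝ → ℝ} (hf : Continuous f) (hg : Continuous g) :
    squareFourierCoeff n m (fun ξ ↦ f ξ - g ξ)
      = squareFourierCoeff n m f - squareFourierCoeff n m g := by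
  simp only [squareFourierCoeff, Complex.ofReal_sub, mul_sub]
  rw [integral_sub (integrableOn_squareFourierCoeff_integrand hf)
    (integrableOn_squareFourierCoeff_integrand hg), mul_sub]

theorem squareFourierCoeff_sum {ι : Type*} {s : Finset ι} {f : ι → ℝ × ℝ → ℝ}
    (hf : ∀ i ∈ s, Continuous (f i)) :
    squareFourierCoeff n m (fun ξ ↦ ∑ i ∈ s, f i ξ) = ∑ i ∈ s, squareFourierCoeff n m (f i) := by
  simp only [squareFourierCoeff, Complex.ofReal_sum, mul_sum]
  rw [integral_finsetSum _ fun i hi ↦ integrableOn_squareFourierCoeff_integrand (hf i hi),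
    mul_sum]

theorem squareFourierCoeff_const_mul (a : ℝ) (f : ℝ × ℝ → ℝ) :
    squareFourierCoeff n m (fun ξ ↦ a * f ξ) = a * squareFourierCoeff n m f := by
  simp only [squareFourierCoeff, Complex.ofReal_mul, mul_left_comm _ (a : ℂ), integral_const_mul]

theorem norm_squareFourierCoeff_le {f : ℝ × ℝ → ℝ} {C : ℝ} (hf : ∀ ξ, |f ξ| ≤ C) :
    ‖squareFourierCoeff n m f‖ ≤ C := by
  have hvol : volume.real (Set.Icc (-π) π ×ˢ Set.Icc (-π) π) = 4 * π ^ 2 := by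
    rw [Measure.volume_eq_prod, measureReal_prod_prod,
      Real.volume_real_Icc_of_le (by linarith [pi_pos])]
    ring
  have hbound : ∀ ξ : ℝ × ℝ,
      ‖Complex.exp (-Complex.I * ((n : ℂ) * (ξ.1 : ℂ) + (m : ℂ) * (ξ.2 : ℂ))) * (f ξ : ℂ)‖ ≤ C := by
    intro ξ
    have hexp : ‖Complex.exp (-Complex.I * ((n : ℂ) * (ξ.1 : ℂ) + (m : ℂ) * (ξ.2 : ℂ)))‖ = 1 := by
      rw [Complex.norm_exp]; simp
    rw [norm_mul, hexp, one_mul, Complex.norm_real, Real.norm_eq_abs]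
    exact hf ξ
  rw [squareFourierCoeff, norm_mul]
  calc _ ≤ ‖(1 / (4 * π ^ 2) : ℂ)‖ * (C * (4 * π ^ 2)) := by
        gcongr
        rw [← hvol]
        exact norm_setIntegral_le_of_norm_le_const
          (isCompact_Icc.prod isCompact_Icc).measure_lt_top fun ξ _ ↦ hbound ξ
    _ = C := by
        rw [norm_div, norm_one, norm_mul, norm_pow, Complex.norm_real,
          Real.norm_of_nonneg pi_pos.le]
        norm_num
        field_simp

end squareFourierCoeff

noncomputable def rho (α₁ : ℝ) (ξ : ℝ × ℝ) : ℝ :=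
  2 * α₁ * cos ξ.1 + 2 * cos ξ.2

@[fun_prop]
theorem continuous_rho (α₁ : ℝ) : Continuous (rho α₁) := by
  unfold rho; fun_prop

theorem abs_rho_le {α₁ : ℝ} (hα₁ : 0 ≤ α₁) (ξ : ℝ × ℝ) : |rho α₁ ξ| ≤ 2 + 2 * α₁ := by
  have h₁ := abs_cos_le_one ξ.1
  have h₂ := abs_cos_le_one ξ.2
  calc |rho α₁ ξ| ≤ 2 * α₁ * |cos ξ.1| + 2 * |cos ξ.2| := by
        unfold rho
        refine (abs_add_le _ _).trans ?_
        rw [abs_mul, abs_mul, abs_mul, abs_two, abs_of_nonneg hα₁]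
    _ ≤ 2 + 2 * α₁ := by nlinarith

theorem B_eq_squareFourierCoeff (α₁ c : ℝ) (n m : ℤ) :
    B α₁ c n m = squareFourierCoeff n m (fun ξ ↦ 1 / (2 + 2 * α₁ + c ^ 2 - rho α₁ ξ)) := by
  rw [B, squareFourierCoeff]
  congr 1
  · ring
  · refine integral_congr_ae (Filter.Eventually.of_forall fun ξ ↦ ?_)
    simp only [rho, Complex.ofReal_div, Complex.ofReal_one]
    ring_nf

theorem g_eq_squareFourierCoeff (α₁ : ℝ) (k : ℕ) (n m : ℤ) :
    g α₁ k n m = squareFourierCoeff n m (fun ξ ↦ (rho α₁ ξ / (2 + 2 * α₁)) ^ k) := by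
  simp only [g, squareFourierCoeff, rho, Complex.ofReal_pow]

theorem G_eq_squareFourierCoeff {α₁ : ℝ} (hα₁ : 2 + 2 * α₁ ≠ 0) (c : ℝ) (N : ℕ) (n m : ℤ) :
    G α₁ c N n m = squareFourierCoeff n m
      (fun ξ ↦ ∑ k ∈ range N, rho α₁ ξ ^ k / (2 + 2 * α₁ + c ^ 2) ^ (k + 1)) := by
  rw [G, mul_sum, squareFourierCoeff_sum fun k _ ↦ by fun_prop]
  refine sum_congr rfl fun k _ ↦ ?_
  have hterm : (fun ξ ↦ rho α₁ ξ ^ k / (2 + 2 * α₁ + c ^ 2) ^ (k + 1)) = fun ξ ↦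
      1 / (2 + 2 * α₁ + c ^ 2) * ((2 + 2 * α₁) / (2 + 2 * α₁ + c ^ 2)) ^ k *
        (rho α₁ ξ / (2 + 2 * α₁)) ^ k := by
    ext ξ
    generalize 2 + 2 * α₁ = l at hα₁ ⊢
    rw [div_pow, div_pow, pow_succ]
    field_simp
  rw [g_eq_squareFourierCoeff, hterm, squareFourierCoeff_const_mul]
  push_cast
  ring

end LatticeGreen

theorem stmt4_general (α₁ c : ℝ) (hα₀ : 0 < α₁) (hc : 0 < c) (N : ℕ) (n m : ℤ) :
    ‖B α₁ c n m - G α₁ c N n m‖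
      ≤ (1 / c ^ 2) * ((2 + 2 * α₁) / (2 + 2 * α₁ + c ^ 2)) ^ N := by
  open LatticeGreen in
  have hρ := abs_rho_le hα₀.le
  have hden : ∀ ξ, 2 + 2 * α₁ + c ^ 2 - rho α₁ ξ ≠ 0 := fun ξ ↦ by
    nlinarith [(abs_le.1 (hρ ξ)).2, sq_pos_of_pos hc]
  rw [B_eq_squareFourierCoeff, G_eq_squareFourierCoeff (by positivity),
    ← squareFourierCoeff_sub (by fun_prop (disch := exact hden _)) (by fun_prop)]
  refine norm_squareFourierCoeff_le fun ξ ↦ ?_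
  calc _ ≤ ((2 + 2 * α₁) / (2 + 2 * α₁ + c ^ 2)) ^ N / (2 + 2 * α₁ + c ^ 2 - (2 + 2 * α₁)) :=
        abs_inv_sub_sum_pow_div_pow_succ_le (hρ ξ) (by linarith [sq_pos_of_pos hc]) N
    _ = _ := by ring

/-- Truncation error bound: `|B_c(n,m) − G_N(c,n,m)| ≤ (1/c²)(λ/(λ+c²))^N`. -/
theorem stmt4 (α₁ c : ℝ) (hα₀ : 0 < α₁) (hα₁ : α₁ ≤ 1) (hc : 0 < c) (N : ℕ) (n m : ℤ) :
    ‖B α₁ c n m - G α₁ c N n m‖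
      ≤ (1 / c ^ 2) * ((2 + 2 * α₁) / (2 + 2 * α₁ + c ^ 2)) ^ N :=
  stmt4_general α₁ c hα₀ hc N n m
end

section
/- Let γ > 0 and M > 0, and let v : ℂ → ℂ be 2π-periodic, analytic on the strip {θ ∈ ℂ : |Im θ| < γ}, and satisfy |v(θ)| < M on that strip. Let I = ∫_{−π}^{π} v(θ) dθ (integral over real θ) and for a positive integer N let I_N = (2π/N) Σ_{k=1}^{N} v(θ_k) with θ_k = 2πk/N − π. Then for every N ≥ 1, |I_N − I| ≤ 4πM/(e^{γN} − 1). -/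
/-!
The Fourier coefficients `c n` of `v` decay like `M e^{-γ|n|}`: shifting the line of integration
to `Im θ = ∓a` with `a < γ` multiplies the integrand `e^{-inθ} v θ` by `e^{-a|n|}`, and periodicity
makes the two vertical sides of the rectangle cancel. The `N`-point trapezoidal rule integrates
`e^{inθ}` exactly unless `n` is a nonzero multiple of `N`, where it returns `2π (-1)^n` instead of
`0` (aliasing). Summing the absolutely convergent Fourier series of `v`, the error is at most
`2π ∑_{j ≠ 0} |c (jN)| ≤ 4πM ∑_{j ≥ 1} e^{-γNj} = 4πM / (e^{γN} - 1)`.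
-/

open Complex Finset Filter
open scoped Real Interval

theorem integral_add_mul_I_eq_of_periodic {f : ℂ → ℂ} {T s : ℝ} (a : ℝ)
    (hper : ∀ z, f (z + T) = f z) (hd : DifferentiableOn ℂ f (im ⁻¹' [[0, s]])) :
    ∫ x in a..a + T, f (x + s * I) = ∫ x in a..a + T, f x := by
  have hrect := integral_boundary_rect_eq_zero_of_differentiableOn f a (a + T + s * I)
    (hd.mono fun z hz => by simpa using hz.2)
  have hsides : ∫ y in (0 : ℝ)..s, f (↑(a + T) + y * I) = ∫ y in (0 : ℝ)..s, f (a + y * I) :=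
    intervalIntegral.integral_congr fun y _ => by
      rw [← hper (a + y * I)]; push_cast; ring_nf
  simp only [ofReal_re, ofReal_im, add_re, add_im, mul_re, mul_im, I_re, I_im, add_zero,
    mul_zero, sub_zero, mul_one, zero_add, ofReal_zero, zero_mul] at hrect
  rw [hsides, add_sub_cancel_right, sub_eq_zero] at hrect
  exact hrect.symm

local instance : Fact (0 < 2 * π) := ⟨Real.two_pi_pos⟩

section FourierCoeff

variable {v : ℂ → ℂ} {G : AddCircle (2 * π) → ℂ}

theorem fourierCoeff_eq_integral_add_mul_I (hG : ∀ x : ℝ, G x = v x)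
    (hper : ∀ z, v (z + 2 * π) = v z) {s : ℝ} (hd : DifferentiableOn ℂ v (im ⁻¹' [[0, s]]))
    (n : ℤ) :
    fourierCoeff G n = (2 * π)⁻¹ * ∫ x in -π..π, exp (-n * I * (x + s * I)) * v (x + s * I) := by
  have hfper : ∀ z, exp (-n * I * (z + 2 * π)) * v (z + 2 * π) = exp (-n * I * z) * v z := by
    intro z
    rw [hper, mul_add, exp_add, show -n * I * (2 * π) = (-n : ℤ) * (2 * π * I) by push_cast; ring,
      exp_int_mul_two_pi_mul_I, mul_one]
  have hshift := integral_add_mul_I_eq_of_periodic (f := fun z => exp (-n * I * z) * v z)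
    (T := 2 * π) (-π) (by exact_mod_cast hfper)
    ((by fun_prop : Differentiable ℂ fun z => exp (-n * I * z)).differentiableOn.mul hd)
  rw [show -π + 2 * π = π by ring] at hshift
  rw [fourierCoeff_eq_intervalIntegral G n (-π), show -π + 2 * π = π by ring, hshift, one_div,
    real_smul]
  congr 1
  refine intervalIntegral.integral_congr fun x _ => ?_
  rw [fourier_coe_apply, hG, smul_eq_mul]
  congr 2
  field_simp
  push_cast
  ring

theorem norm_fourierCoeff_le_of_norm_le (hG : ∀ x : ℝ, G x = v x)
    (hper : ∀ z, v (z + 2 * π) = v z) {s M : ℝ} (hd : DifferentiableOn ℂ v (im ⁻¹' [[0, s]]))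
    (hM : ∀ x : ℝ, ‖v (x + s * I)‖ ≤ M) (n : ℤ) :
    ‖fourierCoeff G n‖ ≤ M * Real.exp (n * s) := by
  have hline : ∀ x : ℝ, ‖exp (-n * I * (x + s * I)) * v (x + s * I)‖ ≤ Real.exp (n * s) * M := by
    intro x
    rw [norm_mul, norm_exp]
    gcongr
    · simp
    · exact hM x
  calc ‖fourierCoeff G n‖
      ≤ (2 * π)⁻¹ * (Real.exp (n * s) * M * |π - -π|) := by
        rw [fourierCoeff_eq_integral_add_mul_I hG hper hd, norm_mul, norm_real, Real.norm_of_nonneg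
          (by positivity)]
        gcongr
        exact intervalIntegral.norm_integral_le_of_norm_le_const fun x _ => hline x
    _ = M * Real.exp (n * s) := by
        rw [show π - -π = 2 * π by ring, abs_of_pos Real.two_pi_pos]
        field_simp

theorem norm_fourierCoeff_le_of_strip (hG : ∀ x : ℝ, G x = v x)
    (hper : ∀ z, v (z + 2 * π) = v z) {γ M : ℝ} (hγ : 0 < γ)
    (hd : DifferentiableOn ℂ v {z | |z.im| < γ}) (hbdd : ∀ z, |z.im| < γ → ‖v z‖ ≤ M) (n : ℤ) :
    ‖fourierCoeff G n‖ ≤ M * Real.exp (-γ * |(n : ℝ)|) := by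
  have hshift : ∀ a ∈ Set.Ioo 0 γ, ‖fourierCoeff G n‖ ≤ M * Real.exp (-a * |(n : ℝ)|) := by
    rintro a ⟨ha0, haγ⟩
    -- the sign of `s` makes `exp (-n I z)` decay along the shifted line
    obtain ⟨s, hs, hns⟩ : ∃ s : ℝ, |s| = a ∧ (n : ℝ) * s = -a * |(n : ℝ)| := by
      rcases le_total 0 (n : ℝ) with h | h
      · exact ⟨-a, by simp [ha0.le], by rw [abs_of_nonneg h]; ring⟩
      · exact ⟨a, abs_of_pos ha0, by rw [abs_of_nonpos h]; ring⟩
    have hstrip : im ⁻¹' [[0, s]] ⊆ {z | |z.im| < γ} := fun z hz => by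
      simpa using (Set.abs_sub_left_of_mem_uIcc hz).trans_lt (by rwa [sub_zero, hs])
    rw [← hns]
    exact norm_fourierCoeff_le_of_norm_le hG hper (hd.mono hstrip)
      (fun x => hbdd _ (by simpa [hs] using haγ)) n
  have hcont : Continuous fun a : ℝ => M * Real.exp (-a * |(n : ℝ)|) := by fun_prop
  exact ge_of_tendsto (hcont.continuousWithinAt (s := Set.Iio γ))
    (mem_of_superset (Ioo_mem_nhdsLT hγ) hshift)

end FourierCoeff

theorem summable_exp_neg_mul_abs {t : ℝ} (ht : 0 < t) :
    Summable fun n : ℤ => Real.exp (-t * |(n : ℝ)|) := by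
  have hgeom : Summable fun n : ℕ => Real.exp (-t * n) := by
    simpa [← Real.exp_nat_mul, mul_comm] using
      summable_geometric_of_lt_one (Real.exp_nonneg (-t)) (Real.exp_lt_one_iff.2 (by linarith))
  exact summable_int_iff_summable_nat_and_neg.2 ⟨by simpa using hgeom, by simpa using hgeom⟩

theorem hasSum_ite_eq_zero_exp_neg_mul_abs {t : ℝ} (ht : 0 < t) :
    HasSum (fun n : ℤ => if n = 0 then 0 else Real.exp (-t * |(n : ℝ)|))
      (2 / (Real.exp t - 1)) := by
  set f : ℤ → ℝ := fun n => if n = 0 then 0 else Real.exp (-t * |(n : ℝ)|)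
  set r := Real.exp (-t)
  have hpos : ∀ n : ℕ, f (n + 1) = r * r ^ n := fun n => by
    rw [← pow_succ', ← Real.exp_nat_mul]
    simp only [f, if_neg (by omega : (n : ℤ) + 1 ≠ 0)]
    push_cast
    rw [abs_of_pos (by positivity)]
    ring_nf
  have hneg : ∀ n : ℕ, f (-(n + 1)) = r * r ^ n := fun n => by
    rw [← hpos n]
    simp only [f, neg_eq_zero, Int.cast_neg, abs_neg]
  have hhalf : HasSum (fun n : ℕ => r * r ^ n) (r / (1 - r)) := by
    simpa only [div_eq_mul_inv] using (hasSum_geometric_of_lt_one (Real.exp_nonneg (-t))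
      (Real.exp_lt_one_iff.2 (by linarith))).mul_left r
  have hsum := HasSum.of_add_one_of_neg_add_one (f := f) (by simpa only [hpos] using hhalf)
    (by simpa only [hneg] using hhalf)
  convert hsum using 1
  have het : Real.exp t * r = 1 := by rw [← Real.exp_add, add_neg_cancel, Real.exp_zero]
  have : Real.exp t - 1 ≠ 0 := by linarith [Real.add_one_lt_exp ht.ne']
  have : 1 - r ≠ 0 := by linarith [Real.exp_lt_one_iff.2 (by linarith : -t < 0)]
  simp only [f, if_pos rfl]
  field_simp
  linear_combination -2 * het

theorem hasSum_ite_dvd_exp_neg_mul_abs {t : ℝ} (ht : 0 < t) {N : ℕ} (hN : N ≠ 0) :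
    HasSum (fun n : ℤ => if (N : ℤ) ∣ n ∧ n ≠ 0 then Real.exp (-t * |(n : ℝ)|) else 0)
      (2 / (Real.exp (t * N) - 1)) := by
  have hinj : Function.Injective fun j : ℤ => j * N := mul_left_injective₀ (by exact_mod_cast hN)
  rw [← hinj.hasSum_iff]
  · convert hasSum_ite_eq_zero_exp_neg_mul_abs (mul_pos ht (by positivity : (0 : ℝ) < N)) using 1
    ext j
    by_cases hj : j = 0
    · simp [hj]
    · simp only [Function.comp_apply, dvd_mul_left, ne_eq, mul_eq_zero, hj, Int.natCast_eq_zero,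
        hN, or_self, not_false_eq_true, and_self, ↓reduceIte, Int.cast_mul, Int.cast_natCast,
        abs_mul, Nat.abs_cast]
      ring_nf
  · intro n hn
    rw [if_neg]
    rintro ⟨⟨j, rfl⟩, -⟩
    exact hn ⟨j, mul_comm _ _⟩

noncomputable def trapezoid (N : ℕ) (f : ℝ → ℂ) : ℂ :=
  (2 * π / N) * ∑ k ∈ Icc 1 N, f (2 * π * k / N - π)

theorem trapezoid_const_mul (N : ℕ) (a : ℂ) (f : ℝ → ℂ) :
    trapezoid N (fun x => a * f x) = a * trapezoid N f := by
  simp only [trapezoid, ← mul_sum]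
  ring

theorem HasSum.trapezoid {ι : Type*} {f : ι → ℝ → ℂ} {g : ℝ → ℂ}
    (h : ∀ x, HasSum (fun i => f i x) (g x)) (N : ℕ) :
    HasSum (fun i => trapezoid N (f i)) (trapezoid N g) :=
  (hasSum_sum fun _ _ => h _).mul_left _

theorem sum_Icc_pow_of_pow_eq_one {K : Type*} [Field K] [DecidableEq K] {w : K} {N : ℕ}
    (hw : w ^ N = 1) :
    ∑ k ∈ Icc 1 N, w ^ k = if w = 1 then (N : K) else 0 := by
  split_ifs with h1
  · simp [h1]
  · rw [← Finset.Ico_add_one_right_eq_Icc, geom_sum_Ico h1 (by omega), pow_succ, hw]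
    simp

theorem trapezoid_fourier {N : ℕ} (hN : N ≠ 0) (n : ℤ) :
    trapezoid N (fun x => fourier n (x : AddCircle (2 * π)))
      = if (N : ℤ) ∣ n then (2 * π * (-1) ^ n : ℂ) else 0 := by
  set ζ := exp (2 * π * I / N)
  have hζ : IsPrimitiveRoot ζ N := isPrimitiveRoot_exp N hN
  have hnode : ∀ k : ℕ, fourier n ((2 * π * k / N - π : ℝ) : AddCircle (2 * π))
      = (-1) ^ n * (ζ ^ n) ^ k := fun k => by
    rw [fourier_coe_apply, ← exp_neg_pi_mul_I, ← exp_int_mul, ← zpow_natCast, ← zpow_mul,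
      ← exp_int_mul, ← exp_add]
    congr 1
    push_cast
    field_simp
    ring
  have hpow : (ζ ^ n) ^ N = 1 := by
    rw [← zpow_natCast, ← zpow_mul, mul_comm, zpow_mul, zpow_natCast, hζ.pow_eq_one, one_zpow]
  simp only [trapezoid, hnode, ← mul_sum, sum_Icc_pow_of_pow_eq_one hpow, hζ.zpow_eq_one_iff_dvd]
  split_ifs
  · field_simp
  · simp

theorem norm_trapezoid_sub_integral_le (G : C(AddCircle (2 * π), ℂ)) {γ M : ℝ} (hγ : 0 < γ)
    (hcoeff : ∀ n : ℤ, ‖fourierCoeff G n‖ ≤ M * Real.exp (-γ * |(n : ℝ)|)) {N : ℕ} (hN : N ≠ 0) :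
    ‖trapezoid N (fun x => G x) - ∫ x in -π..π, G x‖ ≤ 4 * π * M / (Real.exp (γ * N) - 1) := by
  set c := fourierCoeff G
  have hc : Summable c := .of_norm_bounded ((summable_exp_neg_mul_abs hγ).mul_left M) hcoeff
  have htrap : HasSum (fun n => c n * trapezoid N fun x => fourier n (x : AddCircle (2 * π)))
      (trapezoid N fun x => G x) := by
    simpa only [smul_eq_mul, trapezoid_const_mul] using
      HasSum.trapezoid (fun x => has_pointwise_sum_fourier_series_of_summable hc x) N
  have hintegral : ∫ x in -π..π, G x = 2 * π * c 0 := by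
    rw [show c 0 = _ from fourierCoeff_eq_intervalIntegral G 0 (-π), show -π + 2 * π = π by ring]
    simp only [one_div, neg_zero, fourier_apply, zero_smul, AddCircle.toCircle_zero,
      Circle.coe_one, smul_eq_mul, one_mul, real_smul, ofReal_mul, ofReal_inv, ofReal_ofNat]
    field_simp
  have herror : HasSum (fun n => c n * (trapezoid N fun x => fourier n (x : AddCircle (2 * π)))
      - if n = 0 then 2 * π * c 0 else 0) (trapezoid N (fun x => G x) - ∫ x in -π..π, G x) := by
    rw [hintegral]
    exact htrap.sub (hasSum_ite_eq 0 _)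
  have hterm : ∀ n : ℤ, ‖c n * (trapezoid N fun x => fourier n (x : AddCircle (2 * π)))
      - if n = 0 then 2 * π * c 0 else 0‖
      ≤ 2 * π * M * if (N : ℤ) ∣ n ∧ n ≠ 0 then Real.exp (-γ * |(n : ℝ)|) else 0 := by
    intro n
    rw [trapezoid_fourier hN]
    rcases eq_or_ne n 0 with rfl | hn
    · simp [mul_comm]
    by_cases hdvd : (N : ℤ) ∣ n
    · simp only [hdvd, ↓reduceIte, hn, sub_zero, Complex.norm_mul, norm_ofNat, norm_real,
        Real.norm_eq_abs, abs_of_pos Real.pi_pos, norm_zpow, norm_neg, norm_one, one_zpow, mul_one,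
        ne_eq, not_false_eq_true, and_self]
      linarith [mul_le_mul_of_nonneg_left (hcoeff n) Real.two_pi_pos.le]
    · simp [hn, hdvd]
  refine (herror.norm_le_of_bounded
    ((hasSum_ite_dvd_exp_neg_mul_abs hγ hN).mul_left (2 * π * M)) hterm).trans_eq ?_
  ring

theorem stmt11_general (γ M : ℝ) (hγ : 0 < γ) (v : ℂ → ℂ)
    (hper : ∀ θ : ℂ, v (θ + 2 * Real.pi) = v θ)
    (hana : AnalyticOn ℂ v {θ : ℂ | |θ.im| < γ})
    (hbdd : ∀ θ : ℂ, |θ.im| < γ → ‖v θ‖ < M)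
    (N : ℕ) (hN : 1 ≤ N) :
    ‖(2 * Real.pi / N) * ∑ k ∈ Finset.Icc 1 N, v ((2 * Real.pi * k / N - Real.pi : ℝ) : ℂ)
          - ∫ θ : ℝ in (-Real.pi)..Real.pi, v (θ : ℂ)‖
      ≤ 4 * Real.pi * M / (Real.exp (γ * N) - 1) := by
  have hcont : Continuous fun x : ℝ => v x :=
    hana.continuousOn.comp_continuous continuous_ofReal fun x => by simpa using hγ
  have hperR : Function.Periodic (fun x : ℝ => v x) (2 * π) := fun x => by simpa using hper x
  let G : C(AddCircle (2 * π), ℂ) :=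
    ⟨hperR.lift, (QuotientAddGroup.isQuotientMap_mk _).continuous_iff.2 hcont⟩
  have hcoeff := norm_fourierCoeff_le_of_strip (G := G) (fun _ => rfl) hper hγ
    hana.differentiableOn fun z hz => (hbdd z hz).le
  exact norm_trapezoid_sub_integral_le G hγ hcoeff (by omega)

/-- Trefethen–Weideman: exponential convergence of the trapezoidal rule for a
`2π`-periodic function analytic and bounded by `M` in the strip `|Im θ| < γ`. -/
theorem stmt11 (γ M : ℝ) (hγ : 0 < γ) (hM : 0 < M) (v : ℂ → ℂ)
    (hper : ∀ θ : ℂ, v (θ + 2 * Real.pi) = v θ)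
    (hana : AnalyticOn ℂ v {θ : ℂ | |θ.im| < γ})
    (hbdd : ∀ θ : ℂ, |θ.im| < γ → ‖v θ‖ < M)
    (N : ℕ) (hN : 1 ≤ N) :
    ‖(2 * Real.pi / N) * ∑ k ∈ Finset.Icc 1 N, v ((2 * Real.pi * k / N - Real.pi : ℝ) : ℂ)
          - ∫ θ : ℝ in (-Real.pi)..Real.pi, v (θ : ℂ)‖
      ≤ 4 * Real.pi * M / (Real.exp (γ * N) - 1) :=
  stmt11_general γ M hγ v hper hana hbdd N hN
end

section
/- Let 0 < α₁ ≤ 1, c > 0, λ = 2 + 2α₁, and for θ ∈ ℂ let φ(θ) = λ + c² − 2α₁ cos θ. If |α₁ cos θ| < λ/2 + c²/2 − 1, then φ(θ)² − 4 is not a negative real number, i.e. φ(θ)² − 4 ∉ {x ∈ ℝ : x < 0}. -/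
/-! If `φ² − 4 = x` with `x` real, then `φ²` is real, so `φ` is real or purely imaginary.
The hypothesis forces `Re φ > 2`, hence `φ` is a real number larger than `2` and
`φ² − 4 > 0`. -/

namespace Complex

theorem im_eq_zero_of_sq_eq_ofReal {w : ℂ} (hw : w.re ≠ 0) {r : ℝ} (h : w ^ 2 = r) :
    w.im = 0 := by
  have him : w.re * w.im + w.im * w.re = 0 := by simpa [sq] using congrArg im h
  exact (mul_eq_zero.mp (by linarith : w.re * w.im = 0)).resolve_left hw

theorem sq_sub_four_ne_ofReal_of_two_lt_re {w : ℂ} (hw : 2 < w.re) {x : ℝ} (hx : x < 0) :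
    w ^ 2 - 4 ≠ x := by
  intro heq
  have hsq : w ^ 2 = ((x + 4 : ℝ) : ℂ) := by push_cast; linear_combination heq
  have him : w.im = 0 := im_eq_zero_of_sq_eq_ofReal (by linarith) hsq
  have hre : w.re ^ 2 - w.im ^ 2 = x + 4 := by simpa [sq] using congrArg re hsq
  nlinarith

end Complex

theorem stmt12_general (α₁ c : ℝ) (θ : ℂ)
    (h : ‖(α₁ : ℂ) * Complex.cos θ‖ < (2 + 2 * α₁) / 2 + c ^ 2 / 2 - 1) :
    ∀ x : ℝ, x < 0 →
      ((2 + 2 * α₁ + c ^ 2 : ℂ) - 2 * (α₁ : ℂ) * Complex.cos θ) ^ 2 - 4 ≠ (x : ℂ) := by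
  intro x hx
  have hre : ((α₁ : ℂ) * Complex.cos θ).re < α₁ + c ^ 2 / 2 := by
    linarith [Complex.re_le_norm ((α₁ : ℂ) * Complex.cos θ)]
  refine Complex.sq_sub_four_ne_ofReal_of_two_lt_re ?_ hx
  have hφ : ((2 + 2 * α₁ + c ^ 2 : ℂ) - 2 * (α₁ : ℂ) * Complex.cos θ).re
      = 2 + 2 * α₁ + c ^ 2 - 2 * ((α₁ : ℂ) * Complex.cos θ).re := by
    simp [mul_assoc, ← Complex.ofReal_pow]
  linarith

/-- If `|α₁ cos θ| < λ/2 + c²/2 − 1` then `φ(θ)² − 4` is not a negative real number,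
where `φ(θ) = λ + c² − 2α₁ cos θ` (complex cosine). -/
theorem stmt12 (α₁ c : ℝ) (hα₀ : 0 < α₁) (hα₁ : α₁ ≤ 1) (hc : 0 < c) (θ : ℂ)
    (h : ‖(α₁ : ℂ) * Complex.cos θ‖ < (2 + 2 * α₁) / 2 + c ^ 2 / 2 - 1) :
    ∀ x : ℝ, x < 0 →
      ((2 + 2 * α₁ + c ^ 2 : ℂ) - 2 * (α₁ : ℂ) * Complex.cos θ) ^ 2 - 4 ≠ (x : ℂ) :=
  stmt12_general α₁ c θ h
end

section
/- Let p₁, p₂ be reals with 0 < p₁ ≤ p₂ and 2p₁ + 2p₂ < 1. Set α₁ = p₁/p₂, κ = √((1 − 2p₁ − 2p₂)/p₂), and let B_κ denote the LGF with parameters α₁ and c = κ. Define C = 1 / ( 1 + (2p₁/p₂)·B_κ(1,0) + 2·B_κ(0,1) ) and ρ(n,m) = (C/p₂)·B_κ(n,m) for (n,m) ∈ ℤ². Then ρ(0,0) = 1, and for every (n,m) ∈ ℤ² with (n,m) ≠ (0,0), ρ(n,m) = p₁·ρ(n+1,m) + p₁·ρ(n−1,m) + p₂·ρ(n,m+1)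 + p₂·ρ(n,m−1). -/
/-!
Multiplying the integrand `e^{-i(nξ₁ + mξ₂)} / (σ(ξ) + c²)` by `σ(ξ) + c²` and writing
`2 cos ξⱼ` as a sum of two shifted plane waves shows, by orthogonality of the plane waves on
`[-π, π]²`, that the discrete screened Laplacian of `B_c` is the Kronecker delta at the origin.
With `α₁ = p₁/p₂` and `p₂ (2α₁ + 2 + κ²) = 1` this is, after multiplying by `p₂`, the
mean-value relation of the killed walk. At the origin the symmetry `B(-n,-m) = B(n,m)` turns the
denominator of `C` into `B_κ(0,0)/p₂`, and `B_κ(0,0) ≠ 0` since it is the mean of the positive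
function `1/(σ + κ²)`.
-/

open MeasureTheory

section ScreenedLGF

open Complex Real Set

/-- `σ(ξ) + c²` in the notation of the paper. -/
noncomputable def lgfSymbol (α₁ c : ℝ) (ξ : ℝ × ℝ) : ℝ :=
  2 * α₁ * (1 - Real.cos ξ.1) + 2 * (1 - Real.cos ξ.2) + c ^ 2

noncomputable def planeWave (n m : ℤ) (ξ : ℝ × ℝ) : ℂ :=
  Complex.exp (-I * (n * ξ.1 + m * ξ.2))

def torusBox : Set (ℝ × ℝ) := Icc (-π) π ×ˢ Icc (-π) π

theorem B_eq_setIntegral (α₁ c : ℝ) (n m : ℤ) :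
    B α₁ c n m = 1 / (2 * π) ^ 2 * ∫ ξ in torusBox, planeWave n m ξ / lgfSymbol α₁ c ξ :=
  rfl

theorem lgfSymbol_pos {α₁ c : ℝ} (hα : 0 ≤ α₁) (hc : c ≠ 0) (ξ : ℝ × ℝ) :
    0 < lgfSymbol α₁ c ξ := by
  have := Real.cos_le_one ξ.1
  have := Real.cos_le_one ξ.2
  have := pow_two_pos_of_ne_zero hc
  unfold lgfSymbol
  nlinarith

theorem continuous_lgfSymbol (α₁ c : ℝ) : Continuous (lgfSymbol α₁ c) := by
  unfold lgfSymbol; fun_prop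

theorem continuous_planeWave (n m : ℤ) : Continuous (planeWave n m) := by
  unfold planeWave; fun_prop

theorem isCompact_torusBox : IsCompact torusBox := isCompact_Icc.prod isCompact_Icc

theorem volume_torusBox : volume torusBox = ENNReal.ofReal ((2 * π) ^ 2) := by
  rw [torusBox, Measure.volume_eq_prod, Measure.prod_prod, Real.volume_Icc, sub_neg_eq_add,
    ← two_mul, ← ENNReal.ofReal_mul (by positivity), sq]

theorem neg_preimage_torusBox : Neg.neg ⁻¹' torusBox = torusBox := by
  ext ξ
  simp only [torusBox, mem_preimage, mem_prod, Prod.fst_neg, Prod.snd_neg, mem_Icc, neg_le_neg_iff,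
    neg_le]
  tauto

theorem setIntegral_torusBox_comp_neg {E : Type*} [NormedAddCommGroup E] [NormedSpace ℝ E]
    (f : ℝ × ℝ → E) : ∫ ξ in torusBox, f (-ξ) = ∫ ξ in torusBox, f ξ := by
  conv_lhs => rw [← neg_preimage_torusBox]
  exact (Measure.measurePreserving_neg volume).setIntegral_preimage_emb
    (Homeomorph.neg _).measurableEmbedding f torusBox

theorem integral_exp_neg_I_int_mul (n : ℤ) :
    ∫ x in Icc (-π) π, Complex.exp (-I * (n * x)) = if n = 0 then (2 * π : ℂ) else 0 := by
  rw [integral_Icc_eq_integral_Ioc, ← intervalIntegral.integral_of_le (by linarith [pi_pos])]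
  split_ifs with hn
  · simp only [hn, Int.cast_zero, zero_mul, mul_zero, Complex.exp_zero,
      intervalIntegral.integral_const, sub_neg_eq_add, real_smul, ofReal_add, mul_one]
    ring
  have hc : -I * n ≠ 0 := by simp [I_ne_zero, hn]
  simp_rw [← mul_assoc]
  -- `exp (-I n π) = exp (I n π)` because `exp (2 π I n) = 1`
  rw [integral_exp_mul_complex hc, div_eq_zero_iff, sub_eq_zero]
  left
  have := exp_int_mul_two_pi_mul_I (-n)
  push_cast at this ⊢
  rw [show -I * n * (π : ℂ) = -I * n * (-π) + -n * (2 * π * I) by ring, Complex.exp_add, this,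
    mul_one]

theorem setIntegral_torusBox_planeWave (n m : ℤ) :
    ∫ ξ in torusBox, planeWave n m ξ = if n = 0 ∧ m = 0 then ((2 * π) ^ 2 : ℂ) else 0 := by
  have hsplit : planeWave n m =
      fun ξ => Complex.exp (-I * (n * ξ.1)) * Complex.exp (-I * (m * ξ.2)) := by
    ext ξ; rw [planeWave, ← Complex.exp_add]; ring_nf
  rw [hsplit, torusBox, Measure.volume_eq_prod,
    setIntegral_prod_mul (fun x : ℝ => Complex.exp (-I * (n * x)))
      (fun y : ℝ => Complex.exp (-I * (m * y))), integral_exp_neg_I_int_mul,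
    integral_exp_neg_I_int_mul]
  by_cases hn : n = 0 <;> by_cases hm : m = 0 <;> simp [hn, hm, sq]

theorem planeWave_add_one_add_planeWave_sub_one_fst (n m : ℤ) (ξ : ℝ × ℝ) :
    planeWave (n + 1) m ξ + planeWave (n - 1) m ξ = 2 * Real.cos ξ.1 * planeWave n m ξ := by
  simp only [planeWave, ofReal_cos, two_cos, add_mul, ← Complex.exp_add]
  push_cast
  ring_nf

theorem planeWave_add_one_add_planeWave_sub_one_snd (n m : ℤ) (ξ : ℝ × ℝ) :
    planeWave n (m + 1) ξ + planeWave n (m - 1) ξ = 2 * Real.cos ξ.2 * planeWave n m ξ := by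
  simp only [planeWave, ofReal_cos, two_cos, add_mul, ← Complex.exp_add]
  push_cast
  ring_nf

theorem lgfSymbol_mul_planeWave (α₁ c : ℝ) (n m : ℤ) (ξ : ℝ × ℝ) :
    lgfSymbol α₁ c ξ * planeWave n m ξ =
      (2 * α₁ + 2 + c ^ 2) * planeWave n m ξ
        - α₁ * (planeWave (n + 1) m ξ + planeWave (n - 1) m ξ)
        - (planeWave n (m + 1) ξ + planeWave n (m - 1) ξ) := by
  rw [planeWave_add_one_add_planeWave_sub_one_fst, planeWave_add_one_add_planeWave_sub_one_snd,
    lgfSymbol]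
  push_cast
  ring

theorem B_screenedPoisson {α₁ c : ℝ} (hα : 0 ≤ α₁) (hc : c ≠ 0) (n m : ℤ) :
    (2 * α₁ + 2 + c ^ 2) * B α₁ c n m - α₁ * (B α₁ c (n + 1) m + B α₁ c (n - 1) m)
      - (B α₁ c n (m + 1) + B α₁ c n (m - 1)) = if n = 0 ∧ m = 0 then 1 else 0 := by
  set g : ℤ → ℤ → ℝ × ℝ → ℂ := fun k l ξ => planeWave k l ξ / lgfSymbol α₁ c ξ
  have hg : ∀ k l, Integrable (g k l) (volume.restrict torusBox) := fun k l =>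
    ((continuous_planeWave k l).div (continuous_ofReal.comp (continuous_lgfSymbol α₁ c))
      fun ξ => ofReal_ne_zero.2 (lgfSymbol_pos hα hc ξ).ne').continuousOn.integrableOn_compact
      isCompact_torusBox
  have hpt : planeWave n m = fun ξ => (2 * α₁ + 2 + c ^ 2) * g n m ξ
      - α₁ * (g (n + 1) m ξ + g (n - 1) m ξ) - (g n (m + 1) ξ + g n (m - 1) ξ) := by
    ext ξ
    have hD : (lgfSymbol α₁ c ξ : ℂ) ≠ 0 := ofReal_ne_zero.2 (lgfSymbol_pos hα hc ξ).ne'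
    simp only [g]
    field_simp
    linear_combination lgfSymbol_mul_planeWave α₁ c n m ξ
  have hlin : ∫ ξ in torusBox, planeWave n m ξ = (2 * α₁ + 2 + c ^ 2) * (∫ ξ in torusBox, g n m ξ)
      - α₁ * ((∫ ξ in torusBox, g (n + 1) m ξ) + ∫ ξ in torusBox, g (n - 1) m ξ)
      - ((∫ ξ in torusBox, g n (m + 1) ξ) + ∫ ξ in torusBox, g n (m - 1) ξ) := by
    rw [hpt, integral_sub, integral_sub, integral_const_mul, integral_const_mul, integral_add,
      integral_add] <;> fun_prop
  have hnorm : (1 / (2 * π) ^ 2 : ℂ) * (if n = 0 ∧ m = 0 then ((2 * π) ^ 2 : ℂ) else 0) =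
      if n = 0 ∧ m = 0 then 1 else 0 := by
    split_ifs
    · field_simp [pi_ne_zero]
    · rw [mul_zero]
  rw [← hnorm, ← setIntegral_torusBox_planeWave, hlin]
  simp only [B_eq_setIntegral, g]
  ring

theorem B_neg (α₁ c : ℝ) (n m : ℤ) : B α₁ c (-n) (-m) = B α₁ c n m := by
  have hf : ∀ ξ : ℝ × ℝ, planeWave (-n) (-m) ξ / lgfSymbol α₁ c ξ =
      planeWave n m (-ξ) / lgfSymbol α₁ c (-ξ) := fun ξ => by
    simp only [planeWave, lgfSymbol, Prod.fst_neg, Prod.snd_neg, Real.cos_neg]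
    push_cast
    ring_nf
  simp only [B_eq_setIntegral, hf]
  rw [setIntegral_torusBox_comp_neg (fun ξ => planeWave n m ξ / lgfSymbol α₁ c ξ)]

theorem B_zero_zero_ne_zero {α₁ c : ℝ} (hα : 0 ≤ α₁) (hc : c ≠ 0) : B α₁ c 0 0 ≠ 0 := by
  have hpos : 0 < ∫ ξ in torusBox, (lgfSymbol α₁ c ξ)⁻¹ := by
    rw [integral_pos_iff_support_of_nonneg (fun ξ => inv_nonneg.2 (lgfSymbol_pos hα hc ξ).le)
      ((continuous_lgfSymbol α₁ c).inv₀ (fun ξ => (lgfSymbol_pos hα hc ξ).ne')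
        |>.continuousOn.integrableOn_compact isCompact_torusBox)]
    rw [Function.support_eq_univ fun ξ => inv_ne_zero (lgfSymbol_pos hα hc ξ).ne',
      Measure.restrict_apply_univ, volume_torusBox, ENNReal.ofReal_pos]
    positivity
  have hB : B α₁ c 0 0 = ((1 / (2 * π) ^ 2 * ∫ ξ in torusBox, (lgfSymbol α₁ c ξ)⁻¹ : ℝ) : ℂ) := by
    simp only [B_eq_setIntegral, planeWave, Int.cast_zero, zero_mul, add_zero, mul_zero,
      Complex.exp_zero, one_div, ← ofReal_inv]
    rw [ofReal_mul, ← integral_complex_ofReal]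
    push_cast
    ring
  rw [hB, ofReal_ne_zero]
  positivity

theorem B_walk_recurrence {p₁ p₂ c : ℝ} (hp₂ : p₂ ≠ 0) (hα : 0 ≤ p₁ / p₂) (hc : c ≠ 0)
    (hsum : 2 * p₁ + 2 * p₂ + p₂ * c ^ 2 = 1) (n m : ℤ) :
    B (p₁ / p₂) c n m = p₁ * B (p₁ / p₂) c (n + 1) m + p₁ * B (p₁ / p₂) c (n - 1) m
      + p₂ * B (p₁ / p₂) c n (m + 1) + p₂ * B (p₁ / p₂) c n (m - 1)
      + if n = 0 ∧ m = 0 then (p₂ : ℂ) else 0 := by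
  have hrec := B_screenedPoisson hα hc n m
  have hp₂C : (p₂ : ℂ) ≠ 0 := ofReal_ne_zero.2 hp₂
  have hsumC : (2 * p₁ + 2 * p₂ + p₂ * c ^ 2 : ℂ) = 1 := by exact_mod_cast hsum
  push_cast at hrec
  split_ifs at hrec ⊢ <;>
  · field_simp at hrec
    linear_combination hrec - B (p₁ / p₂) c n m * hsumC

end ScreenedLGF

/-- Return probability of a 2D random walk with killing, expressed via the LGF with
`α₁ = p₁/p₂` and `c = κ = √((1 − 2p₁ − 2p₂)/p₂)`: `ρ(0,0) = 1` and `ρ` satisfies the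
harmonicity relation away from the origin. -/
theorem stmt17 (p₁ p₂ : ℝ) (h₁ : 0 < p₁) (h₂ : p₁ ≤ p₂) (h₃ : 2 * p₁ + 2 * p₂ < 1)
    (κ : ℝ) (hκ : κ = Real.sqrt ((1 - 2 * p₁ - 2 * p₂) / p₂))
    (C : ℂ)
    (hC : C = 1 / (1 + (2 * p₁ / p₂ : ℝ) * B (p₁ / p₂) κ 1 0 + 2 * B (p₁ / p₂) κ 0 1))
    (ρ : ℤ → ℤ → ℂ) (hρ : ∀ n m : ℤ, ρ n m = (C / (p₂ : ℂ)) * B (p₁ / p₂) κ n m) :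
    ρ 0 0 = 1 ∧
      ∀ n m : ℤ, ¬(n = 0 ∧ m = 0) →
        ρ n m = (p₁ : ℂ) * ρ (n + 1) m + (p₁ : ℂ) * ρ (n - 1) m +
          (p₂ : ℂ) * ρ n (m + 1) + (p₂ : ℂ) * ρ n (m - 1) := by
  have hp₂ : 0 < p₂ := h₁.trans_le h₂
  have hα : 0 ≤ p₁ / p₂ := div_nonneg h₁.le hp₂.le
  have hκ₀ : κ ≠ 0 := by
    rw [hκ]; exact (Real.sqrt_pos.2 (div_pos (by linarith) hp₂)).ne'
  have hsum : 2 * p₁ + 2 * p₂ + p₂ * κ ^ 2 = 1 := by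
    rw [hκ, Real.sq_sqrt (div_nonneg (by linarith) hp₂.le)]
    field_simp
    ring
  have hwalk := B_walk_recurrence hp₂.ne' hα hκ₀ hsum
  refine ⟨?_, fun n m hnm => ?_⟩
  · have h00 := hwalk 0 0
    have h10 := B_neg (p₁ / p₂) κ 1 0
    have h01 := B_neg (p₁ / p₂) κ 0 1
    simp only [zero_add, zero_sub, neg_zero, and_self, if_true] at h00 h10 h01
    rw [h10, h01] at h00
    have hp₂C : (p₂ : ℂ) ≠ 0 := by exact_mod_cast hp₂.ne'
    have hden : 1 + (2 * p₁ / p₂ : ℝ) * B (p₁ / p₂) κ 1 0 + 2 * B (p₁ / p₂) κ 0 1 =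
        B (p₁ / p₂) κ 0 0 / p₂ := by
      rw [h00]; push_cast; field_simp; ring
    rw [hρ, hC, hden]
    field_simp [B_zero_zero_ne_zero hα hκ₀]
  · simp only [hρ]
    rw [hwalk n m, if_neg hnm]
    ring
end
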